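/- arXiv:1612.03826 — 8 statements merged into one kernel-verified Lean document; each statement's English description precedes it below -/
import Mathlib

section
/- Let G be a group and ρ : G → GL(X) a representation with (ρ(g) - I)² = 0 for all g ∈ G. Define δ(g) = ρ(g) - I. Then for all g, h ∈ G, δ(g)δ(h) = -δ(h)δ(g). -/
theorem stmt1 {G X : Type*} [Group G] [AddCommGroup X] [Module ℂ X]
    (ρ : Representation ℂ G X) (hρ : ∀ g : G, (ρ g - 1) ^ 2 = 0) :
    ∀ g h : G, (ρ g - 1) * (ρ h - 1) = -((ρ h - 1) * (ρ g - 1)) := by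
  intro g h
  set a : Module.End ℂ X := ρ g - 1 with ha_def
  set b : Module.End ℂ X := ρ h - 1 with hb_def
  have ha : a * a = 0 := by have := hρ g; rwa [pow_two] at this
  have hb : b * b = 0 := by have := hρ h; rwa [pow_two] at this
  have hgh : ρ (g * h) - 1 = a * b + a + b := by
    rw [map_mul, ha_def, hb_def]; noncomm_ring
  have hc : a * b * (a * b) + a * b * a + a * b + b * (a * b) + b * a = 0 := by
    have h0 := hρ (g * h)
    rw [hgh, pow_two] at h0
    have expand : (a * b + a + b) * (a * b + a + b) =
        a * b * (a * b) + a * b * a + a * b + b * (a * b) + b * a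
          + (a * a) * b + a * a + a * (b * b) + b * b := by
      noncomm_ring
    rw [expand, ha, hb] at h0
    simpa using h0
  have habab : a * b * (a * b) = 0 := by
    have h2 : a * (a * b * (a * b) + a * b * a + a * b + b * (a * b) + b * a) * b = 0 := by
      rw [hc]; simp
    have id1 : a * b * (a * b) =
        a * (a * b * (a * b) + a * b * a + a * b + b * (a * b) + b * a) * b
          - (a * a) * (b * (a * b) * b) - (a * a) * (b * a * b) - (a * a) * (b * b)
          - a * b * a * (b * b) := by
      noncomm_ring
    rw [id1, h2, ha, hb]
    simp
  have haba : a * b * a = 0 := by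
    have h2 : a * (a * b * (a * b) + a * b * a + a * b + b * (a * b) + b * a) = 0 := by
      rw [hc]; simp
    have id1 : a * b * a =
        a * (a * b * (a * b) + a * b * a + a * b + b * (a * b) + b * a)
          - (a * a) * (b * (a * b)) - (a * a) * (b * a) - (a * a) * b
          - a * b * (a * b) := by
      noncomm_ring
    rw [id1, h2, ha, habab]
    simp
  have hbab : b * (a * b) = 0 := by
    have h2 : (a * b * (a * b) + a * b * a + a * b + b * (a * b) + b * a) * b = 0 := by
      rw [hc]; simp
    have id1 : b * (a * b) =
        (a * b * (a * b) + a * b * a + a * b + b * (a * b) + b * a) * b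
          - a * b * a * (b * b) - a * b * (a * b) - a * (b * b)
          - b * a * (b * b) := by
      noncomm_ring
    rw [id1, h2, hb, habab]
    simp
  rw [habab, haba, hbab] at hc
  simp only [zero_add, add_zero] at hc
  exact eq_neg_of_add_eq_zero_left hc
end

section
/- Let G be a group and ρ : G → GL(X) a representation such that (ρ(g) - I)² = 0 for all g ∈ G. Then (ρ(g₁) - I)(ρ(g₂) - I)(ρ(g₃) - I) = 0 for all g₁, g₂, g₃ ∈ G. -/
private lemma aux_cube {R : Type*} [Ring R] (tf : ∀ r : R, r + r = 0 → r = 0)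
    (T : Set R) (h0 : ∀ x ∈ T, x * x = 0)
    (hneg : ∀ x ∈ T, -x ∈ T)
    (hcirc : ∀ x ∈ T, ∀ y ∈ T, x * y + x + y ∈ T) :
    ∀ x ∈ T, ∀ y ∈ T, ∀ z ∈ T, x * y * z = 0 := by
  -- star identity from squaring x∘y
  have star : ∀ x ∈ T, ∀ y ∈ T,
      x*y*x*y + x*y*x + y*x*y + x*y + y*x = 0 := by
    intro x hx y hy
    have h := h0 _ (hcirc x hx y hy)
    have e : (x*y + x + y) * (x*y + x + y)
        = x*y*x*y + x*y*x + y*x*y + x*y + y*x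
          + ((x*x)*y + x*(y*y) + x*x + y*y) := by noncomm_ring
    rw [e, h0 x hx, h0 y hy] at h
    simpa using h
  -- xyx = -(xy + yx)
  have hC : ∀ x ∈ T, ∀ y ∈ T, x*y*x = -(x*y + y*x) := by
    intro x hx y hy
    have s1 := star x hx y hy
    have s3 := star x hx (-y) (hneg y hy)
    have key : (x*y*x + (x*y + y*x)) + (x*y*x + (x*y + y*x))
        = (x*y*x*y + x*y*x + y*x*y + x*y + y*x)
          - (x*(-y)*x*(-y) + x*(-y)*x + (-y)*x*(-y) + x*(-y) + (-y)*x) := by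
      noncomm_ring
    rw [s1, s3, sub_zero] at key
    exact eq_neg_of_add_eq_zero_left (tf _ key)
  -- x(bc)x = -(x(bc) + (bc)x)
  have hD : ∀ x ∈ T, ∀ b ∈ T, ∀ c ∈ T,
      x*(b*c)*x = -(x*(b*c) + (b*c)*x) := by
    intro x hx b hb c hc
    have h1 := hC x hx (b*c + b + c) (hcirc b hb c hc)
    have h2 := hC x hx b hb
    have h3 := hC x hx c hc
    have e : x*(b*c)*x
        = x*(b*c + b + c)*x - x*b*x - x*c*x := by noncomm_ring
    rw [e, h1, h2, h3]
    noncomm_ring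
  -- x(bc) = -(bc)x
  have hE : ∀ x ∈ T, ∀ b ∈ T, ∀ c ∈ T,
      x*(b*c) + (b*c)*x = 0 := by
    intro x hx b hb c hc
    have h1 := hD x hx b hb c hc
    have h2 := hD (-x) (hneg x hx) b hb c hc
    have e2 : x*(b*c)*x = x*(b*c) + (b*c)*x := by
      calc x*(b*c)*x = (-x)*(b*c)*(-x) := by noncomm_ring
        _ = -((-x)*(b*c) + (b*c)*(-x)) := h2
        _ = x*(b*c) + (b*c)*x := by noncomm_ring
    have hS : x*(b*c) + (b*c)*x = -(x*(b*c) + (b*c)*x) := by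
      calc x*(b*c) + (b*c)*x = x*(b*c)*x := e2.symm
        _ = -(x*(b*c) + (b*c)*x) := h1
    apply tf
    nth_rewrite 2 [hS]
    abel
  intro x hx y hy z hz
  have e1 := hE x hx y hy z hz
  have e2 := hE y hy z hz x hx
  have e3 := hE z hz x hx y hy
  apply tf
  have key : x*y*z + x*y*z
      = (x*(y*z) + (y*z)*x) - (y*(z*x) + (z*x)*y) + (z*(x*y) + (x*y)*z) := by
    noncomm_ring
  rw [key, e1, e2, e3]
  simp

theorem stmt3 {G X : Type*} [Group G] [AddCommGroup X] [Module ℂ X]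
    (ρ : Representation ℂ G X) (hρ : ∀ g : G, (ρ g - 1) ^ 2 = 0) :
    ∀ g₁ g₂ g₃ : G, (ρ g₁ - 1) * (ρ g₂ - 1) * (ρ g₃ - 1) = 0 := by
  have tf : ∀ r : Module.End ℂ X, r + r = 0 → r = 0 := by
    intro r h
    have h2 : (2 : ℂ) • r = 0 := by rw [two_smul]; exact h
    rcases smul_eq_zero.mp h2 with h' | h'
    · exact absurd h' two_ne_zero
    · exact h'
  set T : Set (Module.End ℂ X) := Set.range (fun g : G => ρ g - 1) with hT
  have h0 : ∀ x ∈ T, x * x = 0 := by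
    rintro x ⟨g, rfl⟩
    have := hρ g; rwa [sq] at this
  have hinv : ∀ g : G, (ρ g⁻¹ : Module.End ℂ X) = 2 - ρ g := by
    intro g
    have hsq := hρ g
    have h1 : (ρ g : Module.End ℂ X) * (2 - ρ g) = 1 := by
      have e : (ρ g : Module.End ℂ X) * (2 - ρ g) = 1 - (ρ g - 1)^2 := by
        noncomm_ring
      rw [e, hsq, sub_zero]
    have h2 : (ρ g⁻¹ : Module.End ℂ X) * ρ g = 1 := by
      rw [← map_mul, inv_mul_cancel, map_one]
    calc (ρ g⁻¹ : Module.End ℂ X) = ρ g⁻¹ * (ρ g * (2 - ρ g)) := by rw [h1, mul_one]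
      _ = (ρ g⁻¹ * ρ g) * (2 - ρ g) := by rw [mul_assoc]
      _ = 2 - ρ g := by rw [h2, one_mul]
  have hneg : ∀ x ∈ T, -x ∈ T := by
    rintro x ⟨g, rfl⟩
    refine ⟨g⁻¹, ?_⟩
    show ρ g⁻¹ - 1 = -(ρ g - 1)
    rw [hinv g, show (2 : Module.End ℂ X) = 1 + 1 from by norm_num]
    noncomm_ring
  have hcirc : ∀ x ∈ T, ∀ y ∈ T, x * y + x + y ∈ T := by
    rintro x ⟨g, rfl⟩ y ⟨h, rfl⟩
    exact ⟨g * h, by simp only [map_mul]; noncomm_ring⟩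
  intro g₁ g₂ g₃
  exact aux_cube tf T h0 hneg hcirc _ ⟨g₁, rfl⟩ _ ⟨g₂, rfl⟩ _ ⟨g₃, rfl⟩
end

section
/- Let G be a group, X a finite-dimensional complex vector space, and π : G → GL(X) a representation such that every operator π(g) - I is nilpotent. Then there exists N ∈ ℕ such that (π(h_1) - I)(π(h_2) - I)⋯(π(h_N) - I) = 0 for all h_1, …, h_N ∈ G. -/
open LinearMap Module Polynomial Set

section TracePow
variable {X : Type*} [AddCommGroup X] [Module ℂ X] [FiniteDimensional ℂ X]

-- trace of a power restricted to a generalized eigenspace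
lemma aux_trace_restrict (f : Module.End ℂ X) (μ : ℂ) (k : ℕ)
    (h : Set.MapsTo (f ^ k) (f.maxGenEigenspace μ) (f.maxGenEigenspace μ)) :
    trace ℂ _ ((f ^ k).restrict h) = (finrank ℂ (f.maxGenEigenspace μ)) * μ ^ k := by
  have hf : Set.MapsTo f (f.maxGenEigenspace μ) (f.maxGenEigenspace μ) :=
    Module.End.mapsTo_maxGenEigenspace_of_comm rfl μ
  set E := f.maxGenEigenspace μ
  set g : Module.End ℂ E := f.restrict hf with hg
  have hres : (f ^ k).restrict h = g ^ k := by
    rw [hg, Module.End.pow_restrict k hf]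
  set c : Module.End ℂ E := algebraMap ℂ (Module.End ℂ E) μ with hc
  have hn : IsNilpotent (g - c) := by
    have h' : Set.MapsTo (f - algebraMap ℂ (Module.End ℂ X) μ) E E :=
      Module.End.mapsTo_maxGenEigenspace_of_comm (Algebra.mul_sub_algebraMap_commutes f μ) μ
    have := f.isNilpotent_restrict_maxGenEigenspace_sub_algebraMap μ h'
    convert this using 1
    rw [hg, hc]; ext x; simp; rfl
  have hcomm : Commute c (g - c) := Algebra.commutes μ (g - c)
  have hgk : g ^ k = ∑ m ∈ Finset.range (k + 1),
      c ^ m * (g - c) ^ (k - m) * (Nat.choose k m : Module.End ℂ E) := by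
    have := hcomm.add_pow k
    rw [add_sub_cancel] at this
    exact this
  rw [hres, hgk, map_sum]
  rw [Finset.sum_eq_single k]
  · simp only [Nat.sub_self, pow_zero, Nat.choose_self, Nat.cast_one, mul_one]
    have : c ^ k = algebraMap ℂ (Module.End ℂ E) (μ ^ k) := by rw [hc, map_pow]
    rw [this]
    have : algebraMap ℂ (Module.End ℂ E) (μ ^ k) = (μ ^ k) • (1 : Module.End ℂ E) := by
      simp [Algebra.algebraMap_eq_smul_one]
    rw [this, map_smul, trace_one, smul_eq_mul, mul_comm]
  · intro m hm hmk
    have hj : 0 < k - m := Nat.sub_pos_of_lt (lt_of_le_of_ne (Nat.lt_succ_iff.mp (Finset.mem_range.mp hm)) hmk)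
    have hnil : IsNilpotent (c ^ m * (g - c) ^ (k - m) * (Nat.choose k m : Module.End ℂ E)) := by
      have h1 : IsNilpotent ((g - c) ^ (k - m)) := hn.pow_of_pos hj.ne'
      have h2 : Commute (c ^ m) ((g - c) ^ (k - m)) := (hcomm.pow_pow m (k - m))
      have h3 : IsNilpotent (c ^ m * (g - c) ^ (k - m)) := h2.isNilpotent_mul_left h1
      exact ((Nat.cast_commute (Nat.choose k m) _).symm).isNilpotent_mul_right h3
    have := isNilpotent_trace_of_isNilpotent hnil
    exact isNilpotent_iff_eq_zero.mp this
  · intro h'; exact absurd (Finset.self_mem_range_succ k) h'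

end TracePow

section TracePow2
variable {X : Type*} [AddCommGroup X] [Module ℂ X] [FiniteDimensional ℂ X]

lemma aux_nilpotent_of_trace_pow (f : Module.End ℂ X)
    (h : ∀ k : ℕ, 0 < k → trace ℂ X (f ^ k) = 0) : IsNilpotent f := by
  classical
  set N : ℂ → Submodule ℂ X := fun μ => f.maxGenEigenspace μ with hN
  have hInd := f.independent_maxGenEigenspace
  have hTop : ⨆ μ, N μ = ⊤ := Module.End.iSup_maxGenEigenspace_eq_top f
  have hFin : {μ | N μ ≠ ⊥}.Finite := WellFoundedGT.finite_ne_bot_of_iSupIndep hInd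
  have hInt : DirectSum.IsInternal N :=
    (DirectSum.isInternal_submodule_iff_iSupIndep_and_iSup_eq_top N).mpr ⟨hInd, hTop⟩
  have hMaps : ∀ (k : ℕ) (μ : ℂ), Set.MapsTo (f ^ k) (N μ) (N μ) := fun k μ =>
    Module.End.mapsTo_maxGenEigenspace_of_comm (Commute.pow_right rfl k) μ
  set s := hFin.toFinset with hs
  have key : ∀ k : ℕ, 0 < k → ∑ μ ∈ s, (finrank ℂ (N μ) : ℂ) * μ ^ k = 0 := by
    intro k hk
    have h1 := trace_eq_sum_trace_restrict' hInt hFin (hMaps k)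
    rw [h k hk] at h1
    rw [← hs] at h1
    have h2 : ∀ μ ∈ s, trace ℂ (N μ) ((f ^ k).restrict (hMaps k μ)) =
        (finrank ℂ (N μ) : ℂ) * μ ^ k := fun μ _ => aux_trace_restrict f μ k (hMaps k μ)
    rw [Finset.sum_congr rfl h2] at h1
    exact h1.symm
  have hzero : ∀ μ ∈ s, μ = 0 := by
    intro μ₀ hμ₀
    by_contra hne
    set q : Polynomial ℂ := Polynomial.X * ∏ ν ∈ s.erase μ₀, (Polynomial.X - C ν) with hq
    have hq0 : q.coeff 0 = 0 := by
      simp [hq, coeff_zero_eq_eval_zero]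
    have hsum : ∑ μ ∈ s, (finrank ℂ (N μ) : ℂ) * q.eval μ = 0 := by
      have hev : ∀ μ : ℂ, q.eval μ = ∑ k ∈ q.support, q.coeff k * μ ^ k := by
        intro μ; rw [eval_eq_sum]; rfl
      calc ∑ μ ∈ s, (finrank ℂ (N μ) : ℂ) * q.eval μ
          = ∑ μ ∈ s, ∑ k ∈ q.support, q.coeff k * ((finrank ℂ (N μ) : ℂ) * μ ^ k) := by
            refine Finset.sum_congr rfl fun μ _ => ?_
            rw [hev, Finset.mul_sum]
            refine Finset.sum_congr rfl fun k _ => by ring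
        _ = ∑ k ∈ q.support, q.coeff k * ∑ μ ∈ s, (finrank ℂ (N μ) : ℂ) * μ ^ k := by
            rw [Finset.sum_comm]
            refine Finset.sum_congr rfl fun k _ => by rw [Finset.mul_sum]
        _ = 0 := by
            refine Finset.sum_eq_zero fun k hk => ?_
            have hk0 : 0 < k := by
              rcases Nat.eq_zero_or_pos k with h0 | h0
              · exact absurd (h0 ▸ mem_support_iff.mp hk) (by simp [h0, hq0])
              · exact h0
            rw [key k hk0, mul_zero]
    have heval0 : ∀ μ ∈ s, μ ≠ μ₀ → (finrank ℂ (N μ) : ℂ) * q.eval μ = 0 := by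
      intro μ hμ hμne
      have : q.eval μ = 0 := by
        simp only [hq, eval_mul, eval_X, eval_prod, eval_sub, eval_C]
        apply mul_eq_zero_of_right
        exact Finset.prod_eq_zero (Finset.mem_erase.mpr ⟨hμne, hμ⟩) (sub_self μ)
      rw [this, mul_zero]
    have hsingle : (finrank ℂ (N μ₀) : ℂ) * q.eval μ₀ = 0 := by
      rw [Finset.sum_eq_single_of_mem μ₀ hμ₀ heval0] at hsum
      exact hsum
    have hqne : q.eval μ₀ ≠ 0 := by
      simp only [hq, eval_mul, eval_X, eval_prod, eval_sub, eval_C]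
      refine mul_ne_zero hne (Finset.prod_ne_zero_iff.mpr fun ν hν => ?_)
      exact sub_ne_zero_of_ne (Ne.symm (Finset.mem_erase.mp hν).1)
    have hrank : finrank ℂ (N μ₀) = 0 := by
      have := (mul_eq_zero.mp hsingle).resolve_right hqne
      exact_mod_cast this
    have : N μ₀ = ⊥ := Submodule.finrank_eq_zero.mp hrank
    exact (hFin.mem_toFinset.mp hμ₀) this
  have htop0 : (⊤ : Submodule ℂ X) ≤ N 0 := by
    rw [← hTop]
    refine iSup_le fun μ => ?_
    by_cases hμ : N μ = ⊥
    · rw [hμ]; exact bot_le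
    · have : μ = 0 := hzero μ (hFin.mem_toFinset.mpr hμ)
      rw [this]
  have hmem : ∀ v : X, ∃ n : ℕ, (f ^ n) v = 0 := by
    intro v
    have hv : v ∈ N 0 := htop0 Submodule.mem_top
    rw [hN, Module.End.mem_maxGenEigenspace] at hv
    simpa using hv
  exact ((LinearMap.charpoly_nilpotent_tfae f).out 2 0).mp hmem

end TracePow2

attribute [local instance 100] LieRing.ofAssociativeRing

theorem stmt6 {G X : Type*} [Group G] [AddCommGroup X] [Module ℂ X]
    [FiniteDimensional ℂ X]
    (π : Representation ℂ G X) (hπ : ∀ g : G, IsNilpotent (π g - 1)) :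
    ∃ N : ℕ, ∀ h : Fin N → G, (List.ofFn fun i => π (h i) - 1).prod = 0 := by
  classical
  set S : Set (Module.End ℂ X) := Set.range fun g => π g - 1 with hS
  set V : Submodule ℂ (Module.End ℂ X) := Submodule.span ℂ S with hV
  have hSV : ∀ g : G, π g - 1 ∈ V := fun g =>
    Submodule.subset_span ⟨g, rfl⟩
  have hgen : ∀ g h : G, (π g - 1) * (π h - 1) ∈ V := by
    intro g h
    have : (π g - 1) * (π h - 1) = (π (g * h) - 1) - (π g - 1) - (π h - 1) := by
      rw [map_mul]
      noncomm_ring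
    rw [this]
    exact sub_mem (sub_mem (hSV _) (hSV _)) (hSV _)
  have hmulS : ∀ a ∈ S, ∀ b ∈ V, a * b ∈ V := by
    rintro a ⟨g, rfl⟩ b hb
    induction hb using Submodule.span_induction with
    | mem x hx => obtain ⟨h, rfl⟩ := hx; exact hgen g h
    | zero => simpa using Submodule.zero_mem V
    | add x y _ _ hx hy => rw [mul_add]; exact add_mem hx hy
    | smul c x _ hx => rw [mul_smul_comm]; exact Submodule.smul_mem V c hx
  have hmul : ∀ a ∈ V, ∀ b ∈ V, a * b ∈ V := by
    intro a ha b hb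
    induction ha using Submodule.span_induction with
    | mem x hx => exact hmulS x hx b hb
    | zero => simpa using Submodule.zero_mem V
    | add x y _ _ hx hy => rw [add_mul]; exact add_mem hx hy
    | smul c x _ hx => rw [smul_mul_assoc]; exact Submodule.smul_mem V c hx
  have htr : ∀ a ∈ V, trace ℂ X a = 0 := by
    intro a ha
    induction ha using Submodule.span_induction with
    | mem x hx => obtain ⟨g, rfl⟩ := hx
                  exact isNilpotent_iff_eq_zero.mp (isNilpotent_trace_of_isNilpotent (hπ g))
    | zero => simp
    | add x y _ _ hx hy => rw [map_add, hx, hy, add_zero]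
    | smul c x _ hx => rw [map_smul, hx, smul_zero]
  have hpow : ∀ a ∈ V, ∀ k : ℕ, 0 < k → a ^ k ∈ V := by
    intro a ha k hk
    induction k with
    | zero => exact absurd hk (lt_irrefl 0)
    | succ n ih =>
      rcases Nat.eq_zero_or_pos n with h0 | h0
      · subst h0; simpa using ha
      · rw [pow_succ]; exact hmul _ (ih h0) _ ha
  have hnil : ∀ a ∈ V, IsNilpotent a := fun a ha =>
    aux_nilpotent_of_trace_pow a fun k hk => htr _ (hpow a ha k hk)
  -- the Lie subalgebra on the carrier V
  let L : LieSubalgebra ℂ (Module.End ℂ X) :=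
    { toSubmodule := V
      lie_mem' := fun {x y} hx hy => by
        rw [Ring.lie_def]
        exact sub_mem (hmul x hx y hy) (hmul y hy x hx) }
  have hLmem : ∀ a, a ∈ L ↔ a ∈ V := fun a => Iff.rfl
  have : IsNoetherian ℂ L := by
    infer_instance
  have hEng : LieModule.IsNilpotent L X := by
    apply LieAlgebra.isEngelian_of_isNoetherian (R := ℂ) (L := L) X
    intro x
    exact hnil x.val x.property
  obtain ⟨k, hk⟩ := LieModule.IsNilpotent.nilpotent ℂ L X
  have hprod : ∀ l : List (Module.End ℂ X), (∀ x ∈ l, x ∈ V) → ∀ v : X,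
      l.prod v ∈ LieModule.lowerCentralSeries ℂ L X l.length := by
    intro l
    induction l with
    | nil => intro _ v
             simp only [List.prod_nil, List.length_nil, one_apply]
             rw [LieModule.lowerCentralSeries_zero]
             exact LieSubmodule.mem_top v
    | cons a t ih =>
      intro hl v
      have hv := ih (fun x hx => hl x (List.mem_cons_of_mem a hx)) v
      have ha : a ∈ V := hl a List.mem_cons_self
      rw [List.prod_cons, Module.End.mul_apply, List.length_cons,
        LieModule.lowerCentralSeries_succ]
      exact LieSubmodule.lie_mem_lie (LieSubmodule.mem_top (⟨a, ha⟩ : L))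
        hv
  refine ⟨k, fun h => ?_⟩
  ext v
  have hl : ∀ x ∈ List.ofFn fun i : Fin k => π (h i) - 1, x ∈ V := by
    intro x hx
    rw [List.mem_ofFn] at hx
    obtain ⟨i, rfl⟩ := hx
    exact hSV (h i)
  have := hprod _ hl v
  rw [List.length_ofFn, hk] at this
  simpa using (LieSubmodule.mem_bot _).mp this
end

section
/- Let G be a group, E ⊆ G a generating set, m ∈ ℕ, and f : G → ℂ a function such that Δ_{h_1}⋯Δ_{h_m} f = 0 for all h_1, …, h_m ∈ E. Then Δ_{g_1}⋯Δ_{g_m} f = 0 for all g_1, …, g_m ∈ G. -/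
/-- The right difference operator: `(Δ h f)(x) = f(xh) - f(x)`. -/
def Δ {G : Type*} [Group G] (h : G) (f : G → ℂ) : G → ℂ :=
  fun x => f (x * h) - f x

/-- Iterated difference operator along a list of steps. -/
def ΔL {G : Type*} [Group G] (l : List G) (f : G → ℂ) : G → ℂ :=
  l.foldr Δ f

namespace Stmt9Aux

variable {G : Type*} [Group G]

/-- Right translation operator. -/
def τ (g : G) (f : G → ℂ) : G → ℂ := fun x => f (x * g)

lemma ΔL_cons (a : G) (l : List G) (f : G → ℂ) : ΔL (a :: l) f = Δ a (ΔL l f) := rfl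

lemma ΔL_append (l₁ l₂ : List G) (f : G → ℂ) : ΔL (l₁ ++ l₂) f = ΔL l₁ (ΔL l₂ f) := by
  simp [ΔL, List.foldr_append]

lemma Δ_zero (h : G) : Δ h (0 : G → ℂ) = 0 := by funext x; simp [Δ]

lemma Δ_add (h : G) (u v : G → ℂ) : Δ h (u + v) = Δ h u + Δ h v := by
  funext x; simp [Δ]; ring

lemma Δ_neg (h : G) (u : G → ℂ) : Δ h (-u) = -(Δ h u) := by
  funext x; simp [Δ]; ring

lemma ΔL_zero (l : List G) : ΔL l (0 : G → ℂ) = 0 := by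
  induction l with
  | nil => rfl
  | cons a l ih => rw [ΔL_cons, ih, Δ_zero]

lemma ΔL_add (l : List G) (u v : G → ℂ) : ΔL l (u + v) = ΔL l u + ΔL l v := by
  induction l with
  | nil => rfl
  | cons a l ih => rw [ΔL_cons, ih, Δ_add, ΔL_cons, ΔL_cons]

lemma ΔL_neg (l : List G) (u : G → ℂ) : ΔL l (-u) = -(ΔL l u) := by
  induction l with
  | nil => rfl
  | cons a l ih => rw [ΔL_cons, ih, Δ_neg, ΔL_cons]

lemma τ_zero (g : G) : τ g (0 : G → ℂ) = 0 := rfl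

lemma Δ_τ (h g : G) (f : G → ℂ) : Δ h (τ g f) = τ g (Δ (g⁻¹ * h * g) f) := by
  funext x; simp [Δ, τ, mul_assoc]

lemma ΔL_τ (l : List G) (g : G) (f : G → ℂ) :
    ΔL l (τ g f) = τ g (ΔL (l.map fun h => g⁻¹ * h * g) f) := by
  induction l with
  | nil => rfl
  | cons a l ih => rw [List.map_cons, ΔL_cons, ih, Δ_τ, ΔL_cons]

lemma Δ_one (f : G → ℂ) : Δ (1 : G) f = 0 := by funext x; simp [Δ]

lemma Δ_mul (g h : G) (f : G → ℂ) : Δ (g * h) f = τ g (Δ h f) + Δ g f := by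
  funext x; simp [Δ, τ, mul_assoc]

lemma Δ_inv (g : G) (f : G → ℂ) : Δ g⁻¹ f = -(τ g⁻¹ (Δ g f)) := by
  funext x; simp [Δ, τ, mul_assoc]

end Stmt9Aux

theorem stmt9 {G : Type*} [Group G] (E : Set G) (hE : Subgroup.closure E = ⊤)
    (m : ℕ) (f : G → ℂ)
    (hf : ∀ l : List G, l.length = m → (∀ h ∈ l, h ∈ E) → ΔL l f = 0) :
    ∀ l : List G, l.length = m → ΔL l f = 0 := by
  open Stmt9Aux in
  suffices haux : ∀ (k : ℕ) (l₁ l₂ : List G), l₁.length = k →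
      l₁.length + l₂.length = m → (∀ h ∈ l₂, h ∈ E) → ΔL (l₁ ++ l₂) f = 0 by
    intro l hl
    simpa using haux m l [] hl (by simp [hl]) (by simp)
  intro k
  induction k with
  | zero =>
    intro l₁ l₂ h1 h2 h3
    obtain rfl : l₁ = [] := List.length_eq_zero_iff.mp h1
    simpa using hf l₂ (by simpa using h2) h3
  | succ k ih =>
    intro l₁ l₂ h1 h2 h3
    obtain ⟨l₁', g, rfl⟩ : ∃ l' g, l₁ = l' ++ [g] := by
      rcases List.eq_nil_or_concat l₁ with h | h
      · simp [h] at h1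
      · simpa [List.concat_eq_append] using h
    have hlen : l₁'.length = k := by simpa using h1
    have hlen2 : k + 1 + l₂.length = m := by simpa [hlen] using h2
    have key : ∀ g : G, ∀ l' : List G, l'.length = k → ΔL l' (Δ g (ΔL l₂ f)) = 0 := by
      intro g
      have hg : g ∈ Subgroup.closure E := by rw [hE]; exact Subgroup.mem_top g
      induction hg using Subgroup.closure_induction with
      | mem e he =>
        intro l' hl'
        have : ΔL (l' ++ e :: l₂) f = 0 := by
          apply ih l' (e :: l₂) hl'
          · simp [hl']; omega
          · intro h hh
            rcases List.mem_cons.mp hh with rfl | hh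
            · exact he
            · exact h3 h hh
        rwa [ΔL_append, ΔL_cons] at this
      | one =>
        intro l' _
        rw [Δ_one, ΔL_zero]
      | mul a b _ _ pa pb =>
        intro l' hl'
        rw [Δ_mul, ΔL_add, ΔL_τ, pb _ (by simp [hl']), τ_zero,
          pa _ hl', add_zero]
      | inv a _ pa =>
        intro l' hl'
        rw [Δ_inv, ΔL_neg, ΔL_τ, pa _ (by simp [hl']), τ_zero, neg_zero]
    rw [List.append_assoc, ΔL_append, List.singleton_append, ΔL_cons]
    exact key g l₁' hlen
end

section
/- Let G be a group and f : G → ℂ a bounded function such that for each h in a generating set E of G there exists n(h) ∈ ℕ with Δ_h^{n(h)} f = 0. Then f is constant. -/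
lemma key_lemma {G : Type*} [Group G] (h : G) :
    ∀ n (f : G → ℂ), (∃ C : ℝ, ∀ g : G, ‖f g‖ ≤ C) →
      (Δ h)^[n] f = 0 → Δ h f = 0 := by
  intro n
  induction n with
  | zero =>
    intro f _ h0
    simp only [Function.iterate_zero, id_eq] at h0
    subst h0
    funext x
    simp [Δ]
  | succ n ih =>
    intro f hb h0
    obtain ⟨C, hC⟩ := hb
    have hb' : ∃ C : ℝ, ∀ g : G, ‖Δ h f g‖ ≤ C := by
      refine ⟨C + C, fun g => ?_⟩
      calc ‖f (g * h) - f g‖ ≤ ‖f (g * h)‖ + ‖f g‖ :=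
            norm_sub_le _ _
        _ ≤ C + C := add_le_add (hC _) (hC _)
    have h0' : (Δ h)^[n] (Δ h f) = 0 := by
      rwa [Function.iterate_succ_apply] at h0
    have hc := ih (Δ h f) hb' h0'
    have hinv : ∀ x : G, Δ h f (x * h) = Δ h f x := by
      intro x
      have := congrFun hc x
      simp only [Δ, Pi.zero_apply] at this
      exact sub_eq_zero.mp this
    have hpow : ∀ (x : G) (k : ℕ), Δ h f (x * h ^ k) = Δ h f x := by
      intro x k
      induction k with
      | zero => simp
      | succ k ihk => rw [pow_succ, ← mul_assoc, hinv, ihk]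
    have hval : ∀ (x : G) (k : ℕ), f (x * h ^ k) = f x + (k : ℂ) * Δ h f x := by
      intro x k
      induction k with
      | zero => simp
      | succ k ihk =>
        have : f (x * h ^ k * h) = f (x * h ^ k) + Δ h f (x * h ^ k) := by
          simp [Δ]
        rw [pow_succ, ← mul_assoc, this, hpow, ihk]
        push_cast
        ring
    funext x
    by_contra hd
    have hdpos : 0 < ‖Δ h f x‖ := by
      simpa [norm_pos_iff] using hd
    have hbound : ∀ k : ℕ, (k : ℝ) * ‖Δ h f x‖ ≤ C + C := by
      intro k
      have h1 : ‖(k : ℂ) * Δ h f x‖ = ‖f (x * h ^ k) - f x‖ := by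
        rw [hval x k]; ring_nf
      have h2 : ‖f (x * h ^ k) - f x‖ ≤ C + C :=
        le_trans (norm_sub_le _ _) (add_le_add (hC _) (hC _))
      calc (k : ℝ) * ‖Δ h f x‖ = ‖(k : ℂ) * Δ h f x‖ := by
            rw [norm_mul, Complex.norm_natCast]
        _ ≤ C + C := h1 ▸ h2
    obtain ⟨k, hk⟩ := exists_nat_gt ((C + C) / ‖Δ h f x‖)
    have : C + C < (k : ℝ) * ‖Δ h f x‖ := by
      rw [div_lt_iff₀ hdpos] at hk
      linarith
    linarith [hbound k]

theorem stmt12 {G : Type*} [Group G] (E : Set G) (hE : Subgroup.closure E = ⊤)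
    (f : G → ℂ) (hb : ∃ C : ℝ, ∀ g : G, ‖f g‖ ≤ C)
    (hf : ∀ h ∈ E, ∃ n : ℕ, (Δ h)^[n] f = 0) :
    ∀ x y : G, f x = f y := by
  have hconst : ∀ h' ∈ E, ∀ x : G, f (x * h') = f x := by
    intro h' hh' x
    obtain ⟨n, hn⟩ := hf h' hh'
    have hz := key_lemma h' n f hb hn
    have := congrFun hz x
    simp only [Δ, Pi.zero_apply] at this
    exact sub_eq_zero.mp this
  let S : Subgroup G :=
    { carrier := {g | ∀ x : G, f (x * g) = f x}
      one_mem' := by intro x; simp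
      mul_mem' := by
        intro a b ha hb x
        rw [← mul_assoc, hb, ha]
      inv_mem' := by
        intro a ha x
        have := ha (x * a⁻¹)
        rw [inv_mul_cancel_right] at this; exact this.symm }
  have hES : E ⊆ S := fun h' hh' => hconst h' hh'
  have htop : ∀ g : G, g ∈ S := by
    intro g
    have hle : Subgroup.closure E ≤ S := (Subgroup.closure_le S).mpr hES
    rw [hE] at hle
    exact hle (Subgroup.mem_top g)
  intro x y
  have := htop (x⁻¹ * y) x
  rw [mul_inv_cancel_left] at this; exact this.symm
end

section
/- Let G be a group and f : G → ℂ a bounded function such that for some n, Δ_h^{n+1} f = 0 for every h ∈ G. Then f is constant. -/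
/-- Forward difference on sequences. -/
def Dseq (F : ℕ → ℂ) : ℕ → ℂ := fun k => F (k + 1) - F k

lemma key : ∀ n (F : ℕ → ℂ) (C : ℝ), (∀ k, ‖F k‖ ≤ C) →
    Dseq^[n + 1] F = 0 → ∀ k, F k = F 0 := by
  intro n
  induction n with
  | zero =>
    intro F C hC hD k
    induction k with
    | zero => rfl
    | succ k ih =>
      have h0 : Dseq F k = 0 := by rw [show Dseq^[1] F = Dseq F from rfl] at hD; rw [hD]; rfl
      have : F (k + 1) - F k = 0 := h0
      have := sub_eq_zero.mp this
      rw [this, ih]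
  | succ n ih =>
    intro F C hC hD
    have hD' : Dseq^[n + 1] (Dseq F) = 0 := by
      rw [← Function.iterate_succ_apply]; exact hD
    have hCb : ∀ k, ‖Dseq F k‖ ≤ C + C := fun k =>
      (norm_sub_le _ _).trans (add_le_add (hC _) (hC _))
    have hc : ∀ k, Dseq F k = Dseq F 0 := ih (Dseq F) (C + C) hCb hD'
    set c := Dseq F 0 with hcdef
    have hFk : ∀ k, F k = F 0 + (k : ℂ) * c := by
      intro k
      induction k with
      | zero => simp
      | succ k ih2 =>
        have : F (k + 1) = F k + Dseq F k := by simp [Dseq]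
        rw [this, hc k, ih2]
        push_cast
        ring
    have hc0 : c = 0 := by
      by_contra hne
      obtain ⟨k, hk⟩ := exists_nat_gt ((C + C) / ‖c‖)
      have habs : ‖(k : ℂ) * c‖ ≤ C + C := by
        have : (k : ℂ) * c = F k - F 0 := by rw [hFk k]; ring
        rw [this]
        exact (norm_sub_le _ _).trans (add_le_add (hC _) (hC _))
      rw [norm_mul, Complex.norm_natCast] at habs
      have hcpos : 0 < ‖c‖ := by
        simpa [norm_pos_iff] using hne
      have : (C + C) / ‖c‖ < k := hk
      have h2 : (k : ℝ) * ‖c‖ ≤ C + C := habs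
      have := (div_lt_iff₀ hcpos).mp hk
      linarith
    intro k
    rw [hFk k, hc0]
    ring

lemma diff_conn {G : Type*} [Group G] (m : ℕ) :
    ∀ (f : G → ℂ) (x h : G) (k : ℕ),
      Dseq^[m] (fun j => f (x * h ^ j)) k = (Δ h)^[m] f (x * h ^ k) := by
  induction m with
  | zero => intro f x h k; rfl
  | succ m ih =>
    intro f x h k
    rw [Function.iterate_succ_apply, Function.iterate_succ_apply]
    have : Dseq (fun j => f (x * h ^ j)) = fun j => (Δ h f) (x * h ^ j) := by
      funext j
      simp [Dseq, Δ, pow_succ, mul_assoc]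
    rw [this, ih]

theorem stmt13 {G : Type*} [Group G] (f : G → ℂ)
    (hb : ∃ C : ℝ, ∀ g : G, ‖f g‖ ≤ C)
    (n : ℕ) (hf : ∀ h : G, (Δ h)^[n + 1] f = 0) :
    ∀ x y : G, f x = f y := by
  intro x y
  obtain ⟨C, hC⟩ := hb
  set h := x⁻¹ * y with hh
  set F : ℕ → ℂ := fun j => f (x * h ^ j) with hF
  have hD : Dseq^[n + 1] F = 0 := by
    funext k
    rw [hF]
    rw [diff_conn (n + 1) f x h k, hf h]
    rfl
  have h1 : F 1 = F 0 := key n F C (fun k => hC _) hD 1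
  have : f (x * h) = f x := by simpa [hF, pow_one] using h1
  rw [hh] at this
  rw [← this]
  congr 1
  group
end

section
/- Let G be a group generated by elements of finite order, and let f : G → ℂ satisfy Δ_h^{n+1} f = 0 for all h ∈ G and some n. Then f is constant. -/
private def D : (ℕ → ℂ) → (ℕ → ℂ) := fun g k => g (k + 1) - g k

private lemma periodic_poly_const (m : ℕ) (hm : 0 < m) :
    ∀ (n : ℕ) (g : ℕ → ℂ), (∀ k, g (k + m) = g k) → D^[n] g = 0 → ∀ k, g k = g 0 := by
  intro n
  induction n with
  | zero =>
    intro g _ h0 k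
    simp only [Function.iterate_zero, id] at h0
    simp [h0]
  | succ n ih =>
    intro g hper h0 k
    have hDg : D^[n] (D g) = 0 := by
      rw [← Function.iterate_succ_apply]; exact h0
    have hDper : ∀ k, D g (k + m) = D g k := by
      intro k
      simp only [D]
      rw [show k + m + 1 = k + 1 + m by ring, hper, hper]
    have hc : ∀ j, D g j = D g 0 := ih (D g) hDper hDg
    -- g j = g 0 + j * c
    have key : ∀ j, g j = g 0 + j * D g 0 := by
      intro j
      induction j with
      | zero => simp
      | succ j ihj =>
        have := hc j
        simp only [D] at this
        push_cast
        have : g (j + 1) = g j + D g 0 := by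
          simp only [D] at this ⊢
          linear_combination this
        rw [this, ihj]; ring
    have hmc : (m : ℂ) * D g 0 = 0 := by
      have h1 := key m
      have h2 : g m = g 0 := by simpa using hper 0
      linear_combination h2 - h1
    have hc0 : D g 0 = 0 := by
      rcases mul_eq_zero.mp hmc with h | h
      · exact absurd (Nat.cast_eq_zero.mp h) hm.ne'
      · exact h
    rw [key k, hc0]; ring

private lemma torsion_invariant {G : Type*} [Group G]
    (f : G → ℂ) (n : ℕ) (hf : ∀ h : G, (Δ h)^[n + 1] f = 0)
    {h : G} (hh : IsOfFinOrder h) (x : G) : f (x * h) = f x := by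
  set m := orderOf h with hm
  have hmpos : 0 < m := hh.orderOf_pos
  set g : ℕ → ℂ := fun k => f (x * h ^ k) with hg
  have hiter : ∀ j k, D^[j] g k = (Δ h)^[j] f (x * h ^ k) := by
    intro j
    induction j with
    | zero => intro k; simp [hg]
    | succ j ihj =>
      intro k
      rw [Function.iterate_succ_apply', Function.iterate_succ_apply']
      simp only [D, Δ]
      rw [ihj, ihj]
      congr 2
      rw [pow_succ, mul_assoc]
  have hzero : D^[n + 1] g = 0 := by
    funext k
    rw [hiter, hf h]
    rfl
  have hper : ∀ k, g (k + m) = g k := by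
    intro k
    simp only [hg]
    rw [pow_add, pow_orderOf_eq_one, mul_one]
  have := periodic_poly_const m hmpos (n + 1) g hper hzero 1
  simpa [hg] using this

theorem stmt17 {G : Type*} [Group G]
    (hgen : Subgroup.closure {g : G | IsOfFinOrder g} = ⊤)
    (f : G → ℂ) (n : ℕ) (hf : ∀ h : G, (Δ h)^[n + 1] f = 0) :
    ∀ x y : G, f x = f y := by
  let S : Subgroup G :=
    { carrier := {g : G | ∀ x, f (x * g) = f x}
      one_mem' := by intro x; simp
      mul_mem' := by
        intro a b ha hb x
        rw [← mul_assoc, hb, ha]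
      inv_mem' := by
        intro a ha x
        have := ha (x * a⁻¹)
        rw [inv_mul_cancel_right] at this
        exact this.symm }
  have hS : ∀ g : G, g ∈ S := by
    have : Subgroup.closure {g : G | IsOfFinOrder g} ≤ S := by
      rw [Subgroup.closure_le]
      intro h hh x
      exact torsion_invariant f n hf hh x
    intro g
    exact this (hgen ▸ Subgroup.mem_top g)
  intro x y
  have := hS (x⁻¹ * y) x
  rw [mul_inv_cancel_left] at this
  exact this.symm
end

section
/- Let G be a group, h ∈ G an element of finite order, and f : G → ℂ such that (Δ_h)^{n+1} f = 0 for some n. Then Δ_h f = 0, i.e., f(xh) = f(x) for all x ∈ G. -/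
lemma periodic_pow {G : Type*} [Group G] (h : G) (g : G → ℂ)
    (hg : Δ h g = 0) : ∀ (k : ℕ) (x : G), g (x * h ^ k) = g x := by
  intro k
  induction k with
  | zero => simp
  | succ k ih =>
    intro x
    have h1 := congrFun hg (x * h ^ k)
    simp only [Δ, Pi.zero_apply, sub_eq_zero] at h1
    rw [pow_succ, ← mul_assoc, h1, ih]

lemma sum_lemma {G : Type*} [Group G] (h : G) (f : G → ℂ)
    (hf : Δ h (Δ h f) = 0) :
    ∀ (k : ℕ) (x : G), f (x * h ^ k) = f x + k * Δ h f x := by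
  intro k
  induction k with
  | zero => simp
  | succ k ih =>
    intro x
    have hper := periodic_pow h (Δ h f) hf k x
    have : f (x * h ^ k * h) = f (x * h ^ k) + Δ h f (x * h ^ k) := by
      simp [Δ]
    rw [pow_succ, ← mul_assoc, this, ih, hper]
    push_cast
    ring

lemma key_s18 {G : Type*} [Group G] (h : G) (hord : IsOfFinOrder h) :
    ∀ (n : ℕ) (f : G → ℂ), (Δ h)^[n + 1] f = 0 → Δ h f = 0 := by
  intro n
  induction n with
  | zero =>
    intro f hf
    simpa using hf
  | succ n ih =>
    intro f hf
    have h2 : Δ h (Δ h f) = 0 := by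
      apply ih
      rw [← Function.iterate_succ_apply]
      exact hf
    funext x
    have hsum := sum_lemma h f h2 (orderOf h) x
    rw [pow_orderOf_eq_one, mul_one] at hsum
    have hm : (orderOf h : ℂ) ≠ 0 := by
      exact_mod_cast (hord.orderOf_pos).ne'
    have h0 : (orderOf h : ℂ) * Δ h f x = 0 := by
      linear_combination -hsum
    have := mul_eq_zero.mp h0
    simp [hm] at this
    simpa using this

theorem stmt18 {G : Type*} [Group G] (h : G) (hord : IsOfFinOrder h)
    (f : G → ℂ) (n : ℕ) (hf : (Δ h)^[n + 1] f = 0) :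
    ∀ x : G, f (x * h) = f x := by
  intro x
  have := congrFun (key_s18 h hord n f hf) x
  simp only [Δ, Pi.zero_apply, sub_eq_zero] at this
  exact this
end
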